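/- Let T be a binary tree structure with at least one internal node. For every nonempty finite S ⊆ ℝ^ℓ, the class of decision trees with structure T and leaf labels in {true, false} shatters S if and only if every 2-partition of S is realizable by the tree class T. Consequently, the VC dimension of this class equals the largest integer d such that π²_T(d) = 2^{d−1} − 1. -/
import Mathlib


/-- A `c`-partition of a finite set `S`: a set of `c` pairwise disjoint nonempty
subsets (parts) whose union is `S`. -/
def IsPartition {α : Type*} (S : Finset α) (c : ℕ) (P : Finset (Finset α)) : Prop :=
  P.card = c ∧ (∀ p ∈ P, p.Nonempty) ∧
    (∀ p ∈ P, ∀ q ∈ P, p ≠ q → Disjoint p q) ∧ (∀ x, x ∈ S ↔ ∃ p ∈ P, x ∈ p)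

/-- A binary tree structure: either a leaf, or an internal node with a left and a
right subtree structure. -/
inductive TreeStruct : Type where
  | leaf : TreeStruct
  | node : TreeStruct → TreeStruct → TreeStruct
deriving DecidableEq

namespace TreeStruct

/-- The number of leaves of a binary tree structure. -/
def leaves : TreeStruct → ℕ
  | leaf => 1
  | node l r => l.leaves + r.leaves

/-- The number of internal nodes of a binary tree structure. -/
def internals : TreeStruct → ℕ
  | leaf => 0
  | node l r => l.internals + r.internals + 1

end TreeStruct

/-- A decision tree on `ℝ^ℓ` with labels in `Y`: every leaf carries a label and every
internal node carries a decision rule `(i, θ, s)` with feature `i`, threshold `θ` and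
sign `s` (`true` codes `+1`, `false` codes `-1`). -/
inductive DTree (ℓ : ℕ) (Y : Type) : Type where
  | leaf : Y → DTree ℓ Y
  | node : Fin ℓ → ℝ → Bool → DTree ℓ Y → DTree ℓ Y → DTree ℓ Y

namespace DTree

/-- The output of a decision tree on an example `x`: at a node with rule `(i, θ, s)`,
`x` is sent to the left subtree if `sign (x^i - θ) = s` (i.e. `(θ < x^i) = s`) and to
the right subtree otherwise. -/
noncomputable def eval {ℓ : ℕ} {Y : Type} : DTree ℓ Y → (Fin ℓ → ℝ) → Y
  | leaf y, _ => y
  | node i θ s l r, x => if decide (θ < x i) = s then l.eval x else r.eval x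

/-- The underlying structure of a decision tree. -/
def shape {ℓ : ℕ} {Y : Type} : DTree ℓ Y → TreeStruct
  | leaf _ => .leaf
  | node _ _ _ l r => .node l.shape r.shape

end DTree

/-- A partition `P` of a sample `S ⊆ ℝ^ℓ` is realizable by the class of decision trees
with structure `T` if there is a decision tree `t` with structure `T` (labels in `ℕ`)
such that two points of `S` lie in the same part of `P` iff `t` outputs the same label
on them. -/
def TreeRealizable (ℓ : ℕ) (T : TreeStruct) (S : Finset (Fin ℓ → ℝ))
    (P : Finset (Finset (Fin ℓ → ℝ))) : Prop :=
  ∃ t : DTree ℓ ℕ, t.shape = T ∧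
    ∀ x ∈ S, ∀ y ∈ S, ((∃ p ∈ P, x ∈ p ∧ y ∈ p) ↔ t.eval x = t.eval y)

/-- `PartSet ℓ T a S` : the set of `a`-partitions of `S` realizable by the tree class `T`. -/
def PartSet (ℓ : ℕ) (T : TreeStruct) (a : ℕ) (S : Finset (Fin ℓ → ℝ)) :
    Set (Finset (Finset (Fin ℓ → ℝ))) :=
  {P | IsPartition S a P ∧ TreeRealizable ℓ T S P}

/-- The `a`-partitioning function of the tree class `T` on `ℝ^ℓ`: the largest number of
distinct `a`-partitions realizable by `T` on a sample of `m` points. -/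
noncomputable def treePi (ℓ : ℕ) (T : TreeStruct) (a m : ℕ) : ℕ :=
  sSup {n : ℕ | ∃ S : Finset (Fin ℓ → ℝ), S.card = m ∧ n = (PartSet ℓ T a S).ncard}

/-- The class of Boolean-labeled decision trees with structure `T` on `ℝ^ℓ`. -/
noncomputable def TreeClassB (ℓ : ℕ) (T : TreeStruct) : Set ((Fin ℓ → ℝ) → Bool) :=
  {h | ∃ t : DTree ℓ Bool, t.shape = T ∧ h = t.eval}

/-- `H` shatters the finite set `S` if every Boolean function on `S` is the
restriction to `S` of some `h ∈ H`. -/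
def Shatters {α : Type*} (H : Set (α → Bool)) (S : Finset α) : Prop :=
  ∀ f : α → Bool, ∃ h ∈ H, ∀ x ∈ S, h x = f x

/-- `VCDimIs H d` : `d` is the largest cardinality of a finite set shattered by `H`. -/
def VCDimIs {α : Type*} (H : Set (α → Bool)) (d : ℕ) : Prop :=
  (∃ S : Finset α, S.card = d ∧ Shatters H S) ∧
    ∀ S : Finset α, Shatters H S → S.card ≤ d


section Count
variable {α : Type*} [DecidableEq α]

lemma part2_char (S : Finset α) (P : Finset (Finset α)) :
    IsPartition S 2 P ↔ ∃ A : Finset α, A.Nonempty ∧ A ⊂ S ∧ P = {A, S \ A} := by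
  constructor
  · rintro ⟨hcard, hne, hdisj, hun⟩
    obtain ⟨A, B, hAB, rfl⟩ := Finset.card_eq_two.mp hcard
    have hA : A ∈ ({A, B} : Finset (Finset α)) := by simp
    have hB : B ∈ ({A, B} : Finset (Finset α)) := by simp
    have hAS : A ⊆ S := fun x hx => (hun x).2 ⟨A, hA, hx⟩
    have hd : Disjoint A B := hdisj A hA B hB hAB
    have hBeq : B = S \ A := by
      ext x
      simp only [Finset.mem_sdiff]
      constructor
      · intro hx
        exact ⟨(hun x).2 ⟨B, hB, hx⟩, fun hxA => Finset.disjoint_left.mp hd hxA hx⟩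
      · rintro ⟨hxS, hxA⟩
        rcases (hun x).1 hxS with ⟨p, hp, hxp⟩
        rcases Finset.mem_insert.mp hp with rfl | hp'
        · exact absurd hxp hxA
        · rw [Finset.mem_singleton] at hp'; subst hp'; exact hxp
    obtain ⟨b, hb⟩ := hne B hB
    have hbS : b ∈ S \ A := hBeq ▸ hb
    refine ⟨A, hne A hA, ?_, by rw [hBeq]⟩
    exact Finset.ssubset_iff_of_subset hAS |>.mpr
      ⟨b, (Finset.mem_sdiff.mp hbS).1, (Finset.mem_sdiff.mp hbS).2⟩
  · rintro ⟨A, hA, hAS, rfl⟩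
    have hne : A ≠ S \ A := by
      intro h
      obtain ⟨a, ha⟩ := hA
      exact (Finset.mem_sdiff.mp (h ▸ ha)).2 ha
    refine ⟨Finset.card_pair hne, ?_, ?_, ?_⟩
    · intro p hp
      rcases Finset.mem_insert.mp hp with rfl | hp'
      · exact hA
      · rw [Finset.mem_singleton] at hp'; subst hp'
        exact Finset.sdiff_nonempty.mpr hAS.2
    · intro p hp q hq hpq
      rcases Finset.mem_insert.mp hp with rfl | hp' <;>
        [skip; (rw [Finset.mem_singleton] at hp'; subst hp')] <;>
      rcases Finset.mem_insert.mp hq with rfl | hq' <;>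
        first
        | exact absurd rfl hpq
        | (rw [Finset.mem_singleton] at hq'; subst hq'; exact Finset.disjoint_sdiff)
        | exact Finset.sdiff_disjoint
        | (rw [Finset.mem_singleton] at hq'; subst hq'; exact absurd rfl hpq)
    · intro x
      constructor
      · intro hx
        by_cases hxA : x ∈ A
        · exact ⟨A, by simp, hxA⟩
        · exact ⟨S \ A, by simp, Finset.mem_sdiff.mpr ⟨hx, hxA⟩⟩
      · rintro ⟨p, hp, hxp⟩
        rcases Finset.mem_insert.mp hp with rfl | hp'
        · exact hAS.1 hxp
        · rw [Finset.mem_singleton] at hp'; subst hp'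
          exact (Finset.mem_sdiff.mp hxp).1

lemma part2_count (S : Finset α) :
    {P : Finset (Finset α) | IsPartition S 2 P}.Finite ∧
    {P : Finset (Finset α) | IsPartition S 2 P}.ncard = 2 ^ (S.card - 1) - 1 := by
  rcases S.eq_empty_or_nonempty with rfl | ⟨x0, hx0⟩
  · have hempty : {P : Finset (Finset α) | IsPartition (∅ : Finset α) 2 P} = ∅ := by
      ext P
      simp only [Set.mem_setOf_eq, Set.mem_empty_iff_false, iff_false]
      rw [part2_char]
      rintro ⟨A, hA, hAS, -⟩
      exact hA.ne_empty (Finset.subset_empty.mp hAS.1)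
    rw [hempty]
    simp
  · set E : Finset (Finset α) := (S.erase x0).powerset.erase (S.erase x0) with hE
    set g : Finset α → Finset (Finset α) := fun B => {insert x0 B, S \ insert x0 B} with hg
    have main : ∀ A : Finset α, A.Nonempty → A ⊂ S → x0 ∈ A →
        ∃ B ∈ E, g B = {A, S \ A} := by
      intro A hA hAS hx0A
      refine ⟨A.erase x0, ?_, ?_⟩
      · rw [hE, Finset.mem_erase]
        refine ⟨?_, Finset.mem_powerset.mpr (Finset.erase_subset_erase _ hAS.1)⟩
        intro h
        apply hAS.ne
        calc A = insert x0 (A.erase x0) := (Finset.insert_erase hx0A).symm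
          _ = insert x0 (S.erase x0) := by rw [h]
          _ = S := Finset.insert_erase hx0
      · rw [hg]
        simp only
        rw [Finset.insert_erase hx0A]
    have key : {P : Finset (Finset α) | IsPartition S 2 P} = ↑(E.image g) := by
      ext P
      simp only [Set.mem_setOf_eq, Finset.coe_image, Set.mem_image, Finset.mem_coe]
      rw [part2_char]
      constructor
      · rintro ⟨A, hA, hAS, rfl⟩
        by_cases hx : x0 ∈ A
        · obtain ⟨B, hB, hgB⟩ := main A hA hAS hx
          exact ⟨B, hB, hgB⟩
        · have hx' : x0 ∈ S \ A := Finset.mem_sdiff.mpr ⟨hx0, hx⟩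
          have h1 : S \ (S \ A) = A := sdiff_sdiff_eq_self hAS.1
          have h3 : S \ A ⊂ S := Finset.sdiff_ssubset hAS.1 hA
          obtain ⟨B, hB, hgB⟩ := main (S \ A) ⟨x0, hx'⟩ h3 hx'
          exact ⟨B, hB, by rw [hgB, h1, Finset.pair_comm]⟩
      · rintro ⟨B, hB, rfl⟩
        rw [hE, Finset.mem_erase, Finset.mem_powerset] at hB
        obtain ⟨hB2, hB1⟩ := hB
        have hsub : insert x0 B ⊆ S :=
          Finset.insert_subset hx0 (hB1.trans (Finset.erase_subset _ _))
        have hss : B ⊂ S.erase x0 := lt_of_le_of_ne hB1 hB2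
        obtain ⟨y, hyS, hyB⟩ := Finset.exists_of_ssubset hss
        have hy : y ∉ insert x0 B := by
          rw [Finset.mem_insert]
          rintro (rfl | h)
          · exact (Finset.mem_erase.mp hyS).1 rfl
          · exact hyB h
        exact ⟨insert x0 B, Finset.insert_nonempty _ _,
          (Finset.ssubset_iff_of_subset hsub).mpr
            ⟨y, (Finset.mem_erase.mp hyS).2, hy⟩, rfl⟩
    have hinj : Set.InjOn g ↑E := by
      intro B1 h1 B2 h2 heq
      rw [Finset.mem_coe, hE, Finset.mem_erase, Finset.mem_powerset] at h1 h2
      have hx1 : x0 ∉ B1 := fun h => (Finset.mem_erase.mp (h1.2 h)).1 rfl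
      have hx2 : x0 ∉ B2 := fun h => (Finset.mem_erase.mp (h2.2 h)).1 rfl
      have hmem : insert x0 B1 ∈ g B2 := by
        rw [← heq, hg]; simp
      rw [hg] at hmem
      simp only [Finset.mem_insert, Finset.mem_singleton] at hmem
      rcases hmem with h | h
      · calc B1 = (insert x0 B1).erase x0 := (Finset.erase_insert hx1).symm
          _ = (insert x0 B2).erase x0 := by rw [h]
          _ = B2 := Finset.erase_insert hx2
      · exfalso
        have hmem' : x0 ∈ insert x0 B1 := Finset.mem_insert_self _ _
        rw [h] at hmem'
        exact (Finset.mem_sdiff.mp hmem').2 (Finset.mem_insert_self _ _)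
    have hEcard : E.card = 2 ^ (S.card - 1) - 1 := by
      rw [hE, Finset.card_erase_of_mem (Finset.mem_powerset_self _),
        Finset.card_powerset, Finset.card_erase_of_mem hx0]
    constructor
    · rw [key]; exact (E.image g).finite_toSet
    · rw [key, Set.ncard_coe_finset, Finset.card_image_of_injOn hinj, hEcard]

end Count

section Trees
variable {ℓ : ℕ} {Y Z : Type}

def constT (ℓ : ℕ) (hℓ : 1 ≤ ℓ) (y : Y) : TreeStruct → DTree ℓ Y
  | .leaf => .leaf y
  | .node l r => .node ⟨0, hℓ⟩ 0 true (constT ℓ hℓ y l) (constT ℓ hℓ y r)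

lemma constT_shape (hℓ : 1 ≤ ℓ) (y : Y) (T : TreeStruct) :
    (constT ℓ hℓ y T).shape = T := by
  induction T with
  | leaf => rfl
  | node l r ihl ihr => simp [constT, DTree.shape, ihl, ihr]

lemma constT_eval (hℓ : 1 ≤ ℓ) (y : Y) (T : TreeStruct) (x : Fin ℓ → ℝ) :
    (constT ℓ hℓ y T).eval x = y := by
  induction T with
  | leaf => rfl
  | node l r ihl ihr =>
    simp only [constT, DTree.eval]
    split <;> [exact ihl; exact ihr]

def relabel (g : Y → Z) : DTree ℓ Y → DTree ℓ Z
  | .leaf y => .leaf (g y)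
  | .node i θ s l r => .node i θ s (relabel g l) (relabel g r)

lemma relabel_shape (g : Y → Z) (t : DTree ℓ Y) : (relabel g t).shape = t.shape := by
  induction t with
  | leaf y => rfl
  | node i θ s l r ihl ihr => simp [relabel, DTree.shape, ihl, ihr]

lemma relabel_eval (g : Y → Z) (t : DTree ℓ Y) (x : Fin ℓ → ℝ) :
    (relabel g t).eval x = g (t.eval x) := by
  induction t with
  | leaf y => rfl
  | node i θ s l r ihl ihr =>
    simp only [relabel, DTree.eval]
    split <;> [exact ihl; exact ihr]

lemma exists_sep (hℓ : 1 ≤ ℓ) (T : TreeStruct) (hT : 1 ≤ T.internals)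
    (x y : Fin ℓ → ℝ) (hxy : x ≠ y) :
    ∃ t : DTree ℓ ℕ, t.shape = T ∧ t.eval x ≠ t.eval y := by
  obtain ⟨l, r, rfl⟩ : ∃ l r, T = .node l r := by
    cases T with
    | leaf => simp [TreeStruct.internals] at hT
    | node l r => exact ⟨l, r, rfl⟩
  obtain ⟨i, hi⟩ := Function.ne_iff.mp hxy
  rcases lt_or_gt_of_ne hi with h | h
  · refine ⟨.node i (x i) true (constT ℓ hℓ 1 l) (constT ℓ hℓ 0 r), ?_, ?_⟩
    · simp [DTree.shape, constT_shape]
    · simp only [DTree.eval]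
      rw [if_neg (by simp), if_pos (by simp [h]), constT_eval, constT_eval]
      exact Nat.zero_ne_one
  · refine ⟨.node i (y i) true (constT ℓ hℓ 1 l) (constT ℓ hℓ 0 r), ?_, ?_⟩
    · simp [DTree.shape, constT_shape]
    · simp only [DTree.eval]
      rw [if_pos (by simp [h]), if_neg (by simp), constT_eval, constT_eval]
      exact Nat.one_ne_zero

end Trees

lemma shatters_to_realizable (ℓ : ℕ) (T : TreeStruct) (S : Finset (Fin ℓ → ℝ))
    (hsh : Shatters (TreeClassB ℓ T) S) :
    ∀ P, IsPartition S 2 P → TreeRealizable ℓ T S P := by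
  classical
  intro P hP
  obtain ⟨A, hA, hAS, rfl⟩ := (part2_char S P).mp hP
  obtain ⟨h, ⟨t, hts, rfl⟩, hagree⟩ := hsh (fun x => decide (x ∈ A))
  refine ⟨relabel (fun b => if b then 0 else 1) t, by rw [relabel_shape, hts], ?_⟩
  intro x hx y hy
  rw [relabel_eval, relabel_eval]
  have hx' := hagree x hx
  have hy' := hagree y hy
  have hB : ((if t.eval x then (0:ℕ) else 1) = (if t.eval y then (0:ℕ) else 1)) ↔
      t.eval x = t.eval y := by
    cases h1 : t.eval x <;> cases h2 : t.eval y <;> simp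
  rw [hB]
  have hiff : (t.eval x = t.eval y) ↔ (x ∈ A ↔ y ∈ A) := by
    rw [hx', hy', decide_eq_decide]
  rw [hiff]
  constructor
  · rintro ⟨p, hp, hxp, hyp⟩
    rcases Finset.mem_insert.mp hp with rfl | hp'
    · simp [hxp, hyp]
    · rw [Finset.mem_singleton] at hp'; subst hp'
      have h1 := (Finset.mem_sdiff.mp hxp).2
      have h2 := (Finset.mem_sdiff.mp hyp).2
      simp [h1, h2]
  · intro hif
    by_cases hxA : x ∈ A
    · exact ⟨A, by simp, hxA, hif.mp hxA⟩
    · exact ⟨S \ A, by simp, Finset.mem_sdiff.mpr ⟨hx, hxA⟩,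
        Finset.mem_sdiff.mpr ⟨hy, fun hyA => hxA (hif.mpr hyA)⟩⟩

lemma realizable_to_shatters (ℓ : ℕ) (hℓ : 1 ≤ ℓ) (T : TreeStruct)
    (S : Finset (Fin ℓ → ℝ)) (hS : S.Nonempty)
    (hreal : ∀ P, IsPartition S 2 P → TreeRealizable ℓ T S P) :
    Shatters (TreeClassB ℓ T) S := by
  classical
  intro f
  by_cases hconst : ∀ x ∈ S, ∀ y ∈ S, f x = f y
  · obtain ⟨s0, hs0⟩ := hS
    refine ⟨(constT ℓ hℓ (f s0) T).eval, ⟨_, constT_shape hℓ _ T, rfl⟩, fun x hx => ?_⟩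
    rw [constT_eval]
    exact hconst s0 hs0 x hx
  · push_neg at hconst
    obtain ⟨x0, hx0, y0, hy0, hf⟩ := hconst
    have hex : (∃ z ∈ S, f z = true) ∧ (∃ z ∈ S, f z = false) := by
      cases h0 : f x0 <;> cases h1 : f y0 <;> rw [h0, h1] at hf <;>
        first
        | exact absurd rfl hf
        | exact ⟨⟨y0, hy0, h1⟩, ⟨x0, hx0, h0⟩⟩
        | exact ⟨⟨x0, hx0, h0⟩, ⟨y0, hy0, h1⟩⟩
    obtain ⟨⟨xT, hxTS, hxT⟩, ⟨xF, hxFS, hxF⟩⟩ := hex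
    set A := S.filter (fun x => f x = true) with hAdef
    have hP : IsPartition S 2 {A, S \ A} := by
      rw [part2_char]
      refine ⟨A, ⟨xT, Finset.mem_filter.mpr ⟨hxTS, hxT⟩⟩, ?_, rfl⟩
      refine (Finset.ssubset_iff_of_subset (Finset.filter_subset _ _)).mpr ⟨xF, hxFS, ?_⟩
      intro h
      rw [Finset.mem_filter] at h
      rw [h.2] at hxF
      exact Bool.true_eq_false.mp hxF
    obtain ⟨t, hts, hiff⟩ := hreal _ hP
    refine ⟨(relabel (fun n => decide (n = t.eval xT)) t).eval,
      ⟨_, by rw [relabel_shape, hts], rfl⟩, ?_⟩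
    intro x hx
    rw [relabel_eval]
    have hxTA : xT ∈ A := Finset.mem_filter.mpr ⟨hxTS, hxT⟩
    cases hfx : f x with
    | true =>
      have hxA : x ∈ A := Finset.mem_filter.mpr ⟨hx, hfx⟩
      have heq : t.eval x = t.eval xT :=
        (hiff x hx xT hxTS).mp ⟨A, Finset.mem_insert_self _ _, hxA, hxTA⟩
      simp [heq]
    | false =>
      have hxA : x ∉ A := by
        intro h
        rw [Finset.mem_filter] at h
        rw [h.2] at hfx
        exact Bool.true_eq_false.mp hfx
      have hne : t.eval x ≠ t.eval xT := by
        intro he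
        obtain ⟨p, hp, hxp, hxTp⟩ := (hiff x hx xT hxTS).mpr he
        rcases Finset.mem_insert.mp hp with rfl | hp'
        · exact hxA hxp
        · rw [Finset.mem_singleton] at hp'; subst hp'
          exact (Finset.mem_sdiff.mp hxTp).2 hxTA
      simp [hne]

section Pi
variable (ℓ : ℕ) (T : TreeStruct)

lemma partSet_le (S : Finset (Fin ℓ → ℝ)) :
    (PartSet ℓ T 2 S).ncard ≤ 2 ^ (S.card - 1) - 1 := by
  classical
  obtain ⟨hfin, hcard⟩ := part2_count (α := Fin ℓ → ℝ) S
  calc (PartSet ℓ T 2 S).ncard ≤ {P : Finset (Finset (Fin ℓ → ℝ)) | IsPartition S 2 P}.ncard :=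
        Set.ncard_le_ncard (fun P hP => hP.1) hfin
    _ = 2 ^ (S.card - 1) - 1 := hcard

lemma treeBddAbove_pi (m : ℕ) :
    BddAbove {n : ℕ | ∃ S : Finset (Fin ℓ → ℝ), S.card = m ∧ n = (PartSet ℓ T 2 S).ncard} := by
  refine ⟨2 ^ (m - 1) - 1, ?_⟩
  rintro n ⟨S, hS, rfl⟩
  rw [← hS]
  exact partSet_le ℓ T S

lemma nonempty_pi (hℓ : 1 ≤ ℓ) (m : ℕ) :
    {n : ℕ | ∃ S : Finset (Fin ℓ → ℝ), S.card = m ∧ n = (PartSet ℓ T 2 S).ncard}.Nonempty := by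
  haveI : Nonempty (Fin ℓ) := Fin.pos_iff_nonempty.mp hℓ
  obtain ⟨S, hS⟩ := Finset.exists_card_eq (α := Fin ℓ → ℝ) m
  exact ⟨_, S, hS, rfl⟩

lemma treePi_le (hℓ : 1 ≤ ℓ) (m : ℕ) : treePi ℓ T 2 m ≤ 2 ^ (m - 1) - 1 := by
  refine csSup_le (nonempty_pi ℓ T hℓ m) ?_
  rintro n ⟨S, hS, rfl⟩
  rw [← hS]
  exact partSet_le ℓ T S

lemma treePi_eq_of_all (hℓ : 1 ≤ ℓ) (S : Finset (Fin ℓ → ℝ))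
    (hall : ∀ P, IsPartition S 2 P → TreeRealizable ℓ T S P) :
    treePi ℓ T 2 S.card = 2 ^ (S.card - 1) - 1 := by
  classical
  have hset : PartSet ℓ T 2 S = {P : Finset (Finset (Fin ℓ → ℝ)) | IsPartition S 2 P} :=
    Set.ext fun P => ⟨fun h => h.1, fun hp => ⟨hp, hall P hp⟩⟩
  have hc : (PartSet ℓ T 2 S).ncard = 2 ^ (S.card - 1) - 1 := by
    rw [hset]; exact (part2_count S).2
  refine le_antisymm (treePi_le ℓ T hℓ _) ?_
  calc 2 ^ (S.card - 1) - 1 = (PartSet ℓ T 2 S).ncard := hc.symm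
    _ ≤ treePi ℓ T 2 S.card := le_csSup (treeBddAbove_pi ℓ T S.card) ⟨S, rfl, rfl⟩

lemma all_of_treePi_eq (hℓ : 1 ≤ ℓ) (m : ℕ) (h : treePi ℓ T 2 m = 2 ^ (m - 1) - 1) :
    ∃ S : Finset (Fin ℓ → ℝ), S.card = m ∧
      ∀ P, IsPartition S 2 P → TreeRealizable ℓ T S P := by
  classical
  have hmem : treePi ℓ T 2 m ∈
      {n : ℕ | ∃ S : Finset (Fin ℓ → ℝ), S.card = m ∧ n = (PartSet ℓ T 2 S).ncard} :=
    Nat.sSup_mem (nonempty_pi ℓ T hℓ m) (treeBddAbove_pi ℓ T m)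
  obtain ⟨S, hScard, hn⟩ := hmem
  refine ⟨S, hScard, ?_⟩
  have hfull := part2_count (α := Fin ℓ → ℝ) S
  have heq : PartSet ℓ T 2 S = {P : Finset (Finset (Fin ℓ → ℝ)) | IsPartition S 2 P} := by
    apply Set.eq_of_subset_of_ncard_le (fun P hP => hP.1) ?_ hfull.1
    rw [hfull.2, hScard, ← hn, h]
  intro P hP
  exact ((Set.ext_iff.mp heq P).mpr hP).2

lemma two_mem (hℓ : 1 ≤ ℓ) (hT : 1 ≤ T.internals) :
    treePi ℓ T 2 2 = 2 ^ (2 - 1) - 1 := by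
  classical
  haveI : Nonempty (Fin ℓ) := Fin.pos_iff_nonempty.mp hℓ
  obtain ⟨x, y, hxy⟩ := exists_pair_ne (Fin ℓ → ℝ)
  set S : Finset (Fin ℓ → ℝ) := {x, y} with hSdef
  have hxS : x ∈ S := by simp [hSdef]
  have hyS : y ∈ S := by simp [hSdef]
  have hScard : S.card = 2 := Finset.card_pair hxy
  have hall : ∀ P, IsPartition S 2 P → TreeRealizable ℓ T S P := by
    intro P hP
    have hcover : ∀ z ∈ S, ∃ p ∈ P, z ∈ p := fun z hz => (hP.2.2.2 z).1 hz
    obtain ⟨A, hA, hAS, rfl⟩ := (part2_char S P).mp hP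
    have hsep : ∀ p ∈ ({A, S \ A} : Finset (Finset (Fin ℓ → ℝ))), ¬(x ∈ p ∧ y ∈ p) := by
      rintro p hp ⟨hxp, hyp⟩
      rcases Finset.mem_insert.mp hp with rfl | hp'
      · apply hAS.ne
        apply Finset.Subset.antisymm hAS.1
        intro z hz
        rcases Finset.mem_insert.mp hz with rfl | hz'
        · exact hxp
        · rw [Finset.mem_singleton] at hz'; subst hz'; exact hyp
      · rw [Finset.mem_singleton] at hp'; subst hp'
        obtain ⟨a, ha⟩ := hA
        have haS : a ∈ S := hAS.1 ha
        rcases Finset.mem_insert.mp haS with rfl | h'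
        · exact (Finset.mem_sdiff.mp hxp).2 ha
        · rw [Finset.mem_singleton] at h'; subst h'
          exact (Finset.mem_sdiff.mp hyp).2 ha
    obtain ⟨t, hts, htev⟩ := exists_sep hℓ T hT x y hxy
    refine ⟨t, hts, ?_⟩
    intro u hu v hv
    have husame : ∀ z ∈ S,
        ((∃ p ∈ ({A, S \ A} : Finset (Finset (Fin ℓ → ℝ))), z ∈ p ∧ z ∈ p) ↔
          t.eval z = t.eval z) := by
      intro z hz
      refine iff_of_true ?_ rfl
      obtain ⟨p, hp, hzp⟩ := hcover z hz
      exact ⟨p, hp, hzp, hzp⟩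
    have hu' : u = x ∨ u = y := by simpa [hSdef] using hu
    have hv' : v = x ∨ v = y := by simpa [hSdef] using hv
    rcases hu' with rfl | rfl <;> rcases hv' with rfl | rfl
    · exact husame _ hu
    · refine iff_of_false ?_ htev
      rintro ⟨p, hp, hup, hvp⟩
      exact hsep p hp ⟨hup, hvp⟩
    · refine iff_of_false ?_ fun he => htev he.symm
      rintro ⟨p, hp, hup, hvp⟩
      exact hsep p hp ⟨hvp, hup⟩
    · exact husame _ hu
  calc treePi ℓ T 2 2 = treePi ℓ T 2 S.card := by rw [hScard]
    _ = 2 ^ (S.card - 1) - 1 := treePi_eq_of_all ℓ T hℓ S hall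
    _ = 2 ^ (2 - 1) - 1 := by rw [hScard]

end Pi

theorem tree_shatters_iff_all_two_partitions_and_vcdim
    (ℓ : ℕ) (hℓ : 1 ≤ ℓ) (T : TreeStruct) (hT : 1 ≤ T.internals) :
    (∀ S : Finset (Fin ℓ → ℝ), S.Nonempty →
      (Shatters (TreeClassB ℓ T) S ↔
        ∀ P : Finset (Finset (Fin ℓ → ℝ)), IsPartition S 2 P → TreeRealizable ℓ T S P)) ∧
    (∀ d : ℕ, IsGreatest {d : ℕ | treePi ℓ T 2 d = 2 ^ (d - 1) - 1} d →
      VCDimIs (TreeClassB ℓ T) d) := by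
  constructor
  · intro S hS
    exact ⟨fun h => shatters_to_realizable ℓ T S h,
      fun h => realizable_to_shatters ℓ hℓ T S hS h⟩
  · intro d hd
    have h2 : 2 ∈ {d : ℕ | treePi ℓ T 2 d = 2 ^ (d - 1) - 1} := two_mem ℓ T hℓ hT
    have hd2 : 2 ≤ d := hd.2 h2
    obtain ⟨S, hScard, hall⟩ := all_of_treePi_eq ℓ T hℓ d hd.1
    have hSne : S.Nonempty := Finset.card_pos.mp (by rw [hScard]; omega)
    constructor
    · exact ⟨S, hScard, realizable_to_shatters ℓ hℓ T S hSne hall⟩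
    · intro S' hsh
      rcases S'.eq_empty_or_nonempty with rfl | hne
      · simp
      · have hall' := shatters_to_realizable ℓ T S' hsh
        have hmem : S'.card ∈ {d : ℕ | treePi ℓ T 2 d = 2 ^ (d - 1) - 1} :=
          treePi_eq_of_all ℓ T hℓ S' hall'
        exact hd.2 hmem
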